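/- For all integers n ≥ 1 and all integers q with 1 ≤ q ≤ 2^{n−1}, the complement of the projective rank of the fraction graph E_{2^n/q} satisfies ξ̄_f(E_{2^n/q}) = 2^n/q. -/

import Mathlib

open Filter

/-- A bundled finite simple graph. -/
structure FinGraph where
  V : Type
  [fintypeV : Fintype V]
  G : SimpleGraph V

attribute [instance] FinGraph.fintypeV

namespace FinGraph

/-- Helper constructor. -/
def mk' (V : Type) [Fintype V] (G : SimpleGraph V) : FinGraph := ⟨V, G⟩

/-- Strong product of simple graphs. -/
def strongProdAdj {α β : Type} (G : SimpleGraph α) (H : SimpleGraph β) :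
    SimpleGraph (α × β) where
  Adj x y := x ≠ y ∧ (G.Adj x.1 y.1 ∨ x.1 = y.1) ∧ (H.Adj x.2 y.2 ∨ x.2 = y.2)
  symm := by
    refine ⟨?_⟩; rintro x y ⟨hne, h1, h2⟩
    refine ⟨hne.symm, ?_, ?_⟩
    · rcases h1 with h | h
      · exact Or.inl h.symm
      · exact Or.inr h.symm
    · rcases h2 with h | h
      · exact Or.inl h.symm
      · exact Or.inr h.symm
  loopless := by refine ⟨?_⟩; rintro x ⟨h, -⟩; exact h rfl

/-- The `n`-th strong power of a simple graph, on vertex set `Fin n → α`. -/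
def strongPowAdj {α : Type} (G : SimpleGraph α) (n : ℕ) : SimpleGraph (Fin n → α) where
  Adj x y := x ≠ y ∧ ∀ i, G.Adj (x i) (y i) ∨ x i = y i
  symm := by
    refine ⟨?_⟩; rintro x y ⟨hne, h⟩
    refine ⟨hne.symm, fun i => ?_⟩
    rcases h i with h' | h'
    · exact Or.inl h'.symm
    · exact Or.inr h'.symm
  loopless := by refine ⟨?_⟩; rintro x ⟨h, -⟩; exact h rfl

/-- Disjoint union of simple graphs. -/
def disjUnionAdj {α β : Type} (G : SimpleGraph α) (H : SimpleGraph β) :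
    SimpleGraph (α ⊕ β) where
  Adj x y := (∃ a b, x = Sum.inl a ∧ y = Sum.inl b ∧ G.Adj a b) ∨
             (∃ a b, x = Sum.inr a ∧ y = Sum.inr b ∧ H.Adj a b)
  symm := by
    refine ⟨?_⟩; rintro x y (⟨a, b, rfl, rfl, h⟩ | ⟨a, b, rfl, rfl, h⟩)
    · exact Or.inl ⟨b, a, rfl, rfl, h.symm⟩
    · exact Or.inr ⟨b, a, rfl, rfl, h.symm⟩
  loopless := by
    refine ⟨?_⟩; rintro x (⟨a, b, rfl, h, hadj⟩ | ⟨a, b, rfl, h, hadj⟩)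
    · cases Sum.inl.inj h; exact hadj.ne rfl
    · cases Sum.inr.inj h; exact hadj.ne rfl

/-- Bundled strong product `G ⊠ H`. -/
def sprod (A B : FinGraph) : FinGraph := mk' (A.V × B.V) (strongProdAdj A.G B.G)

/-- Bundled `n`-th strong power `G^{⊠ n}`. -/
def spow (A : FinGraph) (n : ℕ) : FinGraph := mk' (Fin n → A.V) (strongPowAdj A.G n)

/-- Bundled disjoint union `G ⊔ H`. -/
def dUnion (A B : FinGraph) : FinGraph := mk' (A.V ⊕ B.V) (disjUnionAdj A.G B.G)

/-- Bundled complement graph. -/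
def compl (A : FinGraph) : FinGraph := mk' A.V A.Gᶜ

/-- Graph join `G + H`: the complement of the disjoint union of the complements. -/
def join (A B : FinGraph) : FinGraph := (A.compl.dUnion B.compl).compl

/-- The edgeless graph `E_n` on `n` vertices. -/
def edgeless (n : ℕ) : FinGraph := mk' (Fin n) ⊥

/-- `cohomLE A B`: there is a cohomomorphism from `A` to `B`, i.e. a graph homomorphism
from the complement of `A` to the complement of `B`. -/
def cohomLE (A B : FinGraph) : Prop := Nonempty (A.Gᶜ →g B.Gᶜ)

/-- Asymptotic cohomomorphism preorder: `A ≲ B` iff there is `f : ℕ → ℕ` with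
`f n / n → 0` and `A^{⊠ n} ≤ B^{⊠ (n + f n)}` for all `n`. -/
def asympCohomLE (A B : FinGraph) : Prop :=
  ∃ f : ℕ → ℕ, Tendsto (fun n => (f n : ℝ) / (n : ℝ)) atTop (nhds 0) ∧
    ∀ n, cohomLE (A.spow n) (B.spow (n + f n))

/-- The asymptotic spectrum of graphs `Δ(𝒢)`: nonnegative real graph parameters that are
normalised on edgeless graphs, multiplicative under the strong product, additive under
disjoint union, and monotone under cohomomorphism. -/
def Delta : Set (FinGraph → ℝ) :=
  { f | (∀ A, 0 ≤ f A) ∧ (∀ n : ℕ, f (edgeless n) = n) ∧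
        (∀ A B, f (A.sprod B) = f A * f B) ∧
        (∀ A B, f (A.dUnion B) = f A + f B) ∧
        (∀ A B, cohomLE A B → f A ≤ f B) }

/-- Vertex-transitivity of a bundled graph. -/
def IsVertexTransitive (A : FinGraph) : Prop :=
  ∀ u v : A.V, ∃ e : A.G ≃g A.G, e u = v

/-- Cyclic distance between `i, j ∈ {0, …, p-1}` modulo `p`. -/
def cycDist (p i j : ℕ) : ℕ := min ((p + i - j) % p) ((p + j - i) % p)

/-- The fraction graph `E_{p/q}`: vertex set `ℤ_p`, distinct vertices adjacent iff
their cyclic distance modulo `p` is strictly less than `q`. -/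
def fracGraph (p q : ℕ) : FinGraph :=
  mk' (Fin p)
    { Adj := fun i j => i ≠ j ∧ cycDist p i j < q
      symm := by
        refine ⟨?_⟩; rintro i j ⟨hne, hd⟩
        exact ⟨hne.symm, by simpa [cycDist, min_comm] using hd⟩
      loopless := ⟨fun i h => h.1 rfl⟩ }

/-- The complement of the projective rank `ξ̄_f(G)`: the infimum of `d/r` over all
assignments of `r`-dimensional subspaces of `ℂ^d` to the vertices such that distinct
non-adjacent vertices receive orthogonal subspaces. -/
noncomputable def xibar (A : FinGraph) : ℝ :=
  sInf { x : ℝ | ∃ d r : ℕ, 0 < d ∧ 0 < r ∧ x = (d : ℝ) / (r : ℝ) ∧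
    ∃ W : A.V → Submodule ℂ (EuclideanSpace ℂ (Fin d)),
      (∀ v, Module.finrank ℂ (W v) = r) ∧
      ∀ v w : A.V, v ≠ w → ¬ A.G.Adj v w →
        ∀ x ∈ W v, ∀ y ∈ W w, (inner ℂ x y : ℂ) = 0 }

end FinGraph

open FinGraph

/-!
The lower bound `2^n r ≤ q d` for a subspace representation of `E_{2^n/q}` in `ℂ^d` with
`r`-dimensional subspaces is proved by induction on `n`, for all periodic families `W i` with
`W i ⟂ W j` at cyclic distance at least `q`. If `q = 2q'` is even, the subfamilies at even and at
odd indices are such families for `E_{2^(n-1)/q'}`. If `q = 1` the whole family is pairwise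
orthogonal. If `q = 2k + 1 ≥ 3`, the families `W i ⊔ W (i+1)` and `W i ⊓ W (i+1)` work for
`2k + 2` and `2k`, and `dim (U ⊔ V) + dim (U ⊓ V) = dim U + dim V` recombines the two even bounds.
The matching representation assigns to `v` the span of the standard basis vectors
`e_v, …, e_{v+q-1}` of `ℂ^(2^n)`.
-/

open Finset Module Submodule Function

theorem Finset.sum_range_two_mul_eq {M : Type*} [AddCommMonoid M] (f : ℕ → M) (m : ℕ) :
    ∑ i ∈ range (2 * m), f i = ∑ i ∈ range m, f (2 * i) + ∑ i ∈ range m, f (2 * i + 1) := by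
  induction m with
  | zero => simp
  | succ m ih =>
    rw [show 2 * (m + 1) = 2 * m + 1 + 1 by ring, sum_range_succ, sum_range_succ, ih,
      sum_range_succ, sum_range_succ]
    abel

theorem Function.Periodic.sum_range_add_one {M : Type*} [AddCancelCommMonoid M] {f : ℕ → M}
    {p : ℕ} (hf : Periodic f p) : ∑ i ∈ range p, f (i + 1) = ∑ i ∈ range p, f i := by
  have h := (sum_range_succ' f p).symm.trans (sum_range_succ f p)
  rwa [show f p = f 0 by simpa using hf 0, add_left_inj] at h

theorem Function.Periodic.sum_finrank_sup_add_sum_finrank_inf {K V : Type*} [DivisionRing K]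
    [AddCommGroup V] [Module K V] [FiniteDimensional K V] {W : ℕ → Submodule K V} {p : ℕ}
    (hW : Periodic W p) :
    ∑ i ∈ range p, finrank K (W i ⊔ W (i + 1) : Submodule K V)
      + ∑ i ∈ range p, finrank K (W i ⊓ W (i + 1) : Submodule K V)
      = 2 * ∑ i ∈ range p, finrank K (W i) := by
  have hshift : ∑ i ∈ range p, finrank K (W (i + 1)) = ∑ i ∈ range p, finrank K (W i) :=
    (hW.comp fun U : Submodule K V => finrank K U).sum_range_add_one
  rw [← sum_add_distrib, sum_congr rfl fun i _ => finrank_sup_add_finrank_inf_eq (W i) (W (i + 1)),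
    sum_add_distrib, hshift]
  ring

section InnerProductSpace

variable {𝕜 E : Type*} [RCLike 𝕜] [NormedAddCommGroup E] [InnerProductSpace 𝕜 E]

theorem Submodule.sum_finrank_le_finrank_sup_of_pairwise_isOrtho [FiniteDimensional 𝕜 E]
    {ι : Type*} {W : ι → Submodule 𝕜 E} {s : Finset ι}
    (h : (s : Set ι).Pairwise fun i j => W i ⟂ W j) :
    ∑ i ∈ s, finrank 𝕜 (W i) ≤ finrank 𝕜 (s.sup W : Submodule 𝕜 E) := by
  induction s using Finset.cons_induction with
  | empty => simp
  | cons a s ha ih =>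
    have hs : (s : Set ι).Pairwise fun i j => W i ⟂ W j :=
      h.mono fun i hi => mem_cons.2 (Or.inr hi)
    have hortho : s.sup W ⟂ W a := Finset.sup_le fun j hj =>
      h (mem_cons.2 (Or.inr hj)) (mem_cons_self a s) (by rintro rfl; exact ha hj)
    have hdisj : W a ⊓ s.sup W = ⊥ := hortho.symm.disjoint.eq_bot
    have hdim := finrank_sup_add_finrank_inf_eq (W a) (s.sup W)
    rw [hdisj, finrank_bot, add_zero] at hdim
    rw [sum_cons, sup_cons, hdim]
    exact Nat.add_le_add_left (ih hs) _

/-- A subspace representation of the complement of `E_{p/q}`, indexed `p`-periodically by `ℕ`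
so that halving `p` and shifting indices need no modular arithmetic. -/
def IsCyclicOrthRep (p q : ℕ) (W : ℕ → Submodule 𝕜 E) : Prop :=
  Periodic W p ∧ ∀ i j, i + q ≤ j → j + q ≤ i + p → W i ⟂ W j

namespace IsCyclicOrthRep

variable {p q : ℕ} {W : ℕ → Submodule 𝕜 E}

theorem comp_two_mul_add (h : IsCyclicOrthRep (2 * p) (2 * q) W) (j : ℕ) :
    IsCyclicOrthRep p q fun i => W (2 * i + j) := by
  refine ⟨fun i => ?_, fun i k h₁ h₂ => h.2 _ _ (by omega) (by omega)⟩
  simpa only [show 2 * (i + p) + j = 2 * i + j + 2 * p by ring] using h.1 (2 * i + j)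

theorem sup_succ (h : IsCyclicOrthRep p q W) :
    IsCyclicOrthRep p (q + 1) fun i => W i ⊔ W (i + 1) := by
  refine ⟨fun i => by simp only [add_right_comm i p 1, h.1 i, h.1 (i + 1)], fun i j h₁ h₂ => ?_⟩
  simp only [isOrtho_sup_left, isOrtho_sup_right]
  exact ⟨⟨h.2 _ _ (by omega) (by omega), h.2 _ _ (by omega) (by omega)⟩,
    h.2 _ _ (by omega) (by omega), h.2 _ _ (by omega) (by omega)⟩

theorem inf_pred (h : IsCyclicOrthRep p (q + 1) W) (hqp : 2 * (q + 1) ≤ p) :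
    IsCyclicOrthRep p q fun i => W i ⊓ W (i + 1) := by
  refine ⟨fun i => by simp only [add_right_comm i p 1, h.1 i, h.1 (i + 1)], fun i j h₁ h₂ => ?_⟩
  by_cases hj : j = i + q
  · exact (h.2 i (j + 1) (by omega) (by omega)).mono inf_le_left inf_le_right
  by_cases hj' : j + q = i + p
  · exact (h.2 (i + 1) j (by omega) (by omega)).mono inf_le_right inf_le_left
  exact (h.2 i j (by omega) (by omega)).mono inf_le_left inf_le_left

theorem sum_finrank_le_of_one [FiniteDimensional 𝕜 E] (h : IsCyclicOrthRep p 1 W) :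
    ∑ i ∈ range p, finrank 𝕜 (W i) ≤ finrank 𝕜 E := by
  refine (sum_finrank_le_finrank_sup_of_pairwise_isOrtho fun i hi j hj hij => ?_).trans
    (Submodule.finrank_le _)
  simp only [coe_range, Set.mem_Iio] at hi hj
  rcases Nat.lt_or_gt_of_ne hij with hlt | hlt
  · exact h.2 i j (by omega) (by omega)
  · exact (h.2 j i (by omega) (by omega)).symm

theorem sum_finrank_le [FiniteDimensional 𝕜 E] {n : ℕ} (h : IsCyclicOrthRep (2 ^ n) q W)
    (hq : 0 < q) (hqn : 2 * q ≤ 2 ^ n) :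
    ∑ i ∈ range (2 ^ n), finrank 𝕜 (W i) ≤ q * finrank 𝕜 E := by
  induction n generalizing q W with
  | zero => omega
  | succ n ih =>
    have bound_of_even : ∀ {q' : ℕ} {W' : ℕ → Submodule 𝕜 E},
        IsCyclicOrthRep (2 ^ (n + 1)) (2 * q') W' → 0 < q' → 2 * q' ≤ 2 ^ n →
        ∑ i ∈ range (2 ^ (n + 1)), finrank 𝕜 (W' i) ≤ 2 * q' * finrank 𝕜 E := by
      intro q' W' h' hq' hqn'
      rw [pow_succ'] at h' ⊢
      rw [sum_range_two_mul_eq]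
      have h₀ : ∑ i ∈ range (2 ^ n), finrank 𝕜 (W' (2 * i)) ≤ q' * finrank 𝕜 E :=
        ih (h'.comp_two_mul_add 0) hq' hqn'
      have h₁ := ih (h'.comp_two_mul_add 1) hq' hqn'
      linarith
    rw [pow_succ'] at hqn
    obtain ⟨k, rfl | rfl⟩ := Nat.even_or_odd' q
    · exact bound_of_even h (by omega) (by omega)
    rcases Nat.eq_zero_or_pos k with rfl | hk
    · simpa using h.sum_finrank_le_of_one
    have h2n : 2 ∣ 2 ^ n := dvd_pow_self 2 (by rintro rfl; omega)
    have hP := bound_of_even (q' := k + 1) h.sup_succ (by omega) (by omega)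
    have hQ := bound_of_even (q' := k) (h.inf_pred (by omega)) hk (by omega)
    have hsum := h.1.sum_finrank_sup_add_sum_finrank_inf
    linarith

end IsCyclicOrthRep

end InnerProductSpace

namespace FinGraph

open Fin.NatCast

theorem cycDist_eq_min_val_sub {p : ℕ} (i j : Fin p) :
    cycDist p i j = min (i - j).val (j - i).val := by
  simp only [cycDist, Fin.val_sub]
  congr 2 <;> omega

theorem cycDist_lt_of_add_eq {p q : ℕ} [NeZero p] {v w s t : Fin p} (h : v + s = w + t)
    (hs : s.val < q) (ht : t.val < q) : cycDist p v w < q := by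
  rw [cycDist_eq_min_val_sub]
  rcases le_total t s with hts | hst
  · have hwv : w - v = s - t := sub_eq_sub_iff_add_eq_add.2 (by rw [← h, add_comm])
    exact (min_le_right _ _).trans_lt (by rw [hwv, Fin.sub_val_of_le hts]; omega)
  · have hvw : v - w = t - s := sub_eq_sub_iff_add_eq_add.2 (by rw [h, add_comm])
    exact (min_le_left _ _).trans_lt (by rw [hvw, Fin.sub_val_of_le hst]; omega)

theorem le_cycDist_natCast_add {p q : ℕ} [NeZero p] (i : ℕ) {s : ℕ} (hq : 0 < q) (h₁ : q ≤ s)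
    (h₂ : s + q ≤ p) : q ≤ cycDist p (i : Fin p) ((i + s : ℕ) : Fin p) := by
  rw [cycDist_eq_min_val_sub, Nat.cast_add, sub_add_cancel_left, add_sub_cancel_left,
    Fin.val_neg', Fin.val_natCast, Nat.mod_eq_of_lt (by omega : s < p),
    Nat.mod_eq_of_lt (by omega : p - s < p)]
  omega

/-- The feasible assignments in the definition of `xibar`. -/
def IsSubspaceRep (A : FinGraph) {d : ℕ} (r : ℕ)
    (W : A.V → Submodule ℂ (EuclideanSpace ℂ (Fin d))) : Prop :=
  (∀ v, finrank ℂ (W v) = r) ∧ ∀ v w, v ≠ w → ¬ A.G.Adj v w → W v ⟂ W w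

theorem xibar_eq_of_isSubspaceRep {A : FinGraph} {d₀ r₀ : ℕ} (hd₀ : 0 < d₀) (hr₀ : 0 < r₀)
    {W₀ : A.V → Submodule ℂ (EuclideanSpace ℂ (Fin d₀))} (hW₀ : A.IsSubspaceRep r₀ W₀)
    (hmin : ∀ (d r : ℕ) (W : A.V → Submodule ℂ (EuclideanSpace ℂ (Fin d))),
      A.IsSubspaceRep r W → d₀ * r ≤ r₀ * d) :
    xibar A = d₀ / r₀ := by
  refine IsLeast.csInf_eq ⟨⟨d₀, r₀, hd₀, hr₀, rfl, W₀, hW₀.1, fun v w hvw hadj =>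
    isOrtho_iff_inner_eq.1 (hW₀.2 v w hvw hadj)⟩, ?_⟩
  rintro _ ⟨d, r, -, hr, rfl, W, hrank, horth⟩
  have hle := hmin d r W ⟨hrank, fun v w hvw hadj => isOrtho_iff_inner_eq.2 (horth v w hvw hadj)⟩
  have hle' : (d₀ * r : ℝ) ≤ r₀ * d := by exact_mod_cast hle
  rw [div_le_div_iff₀ (by positivity) (by positivity)]
  linarith

theorem IsSubspaceRep.isCyclicOrthRep {p q d r : ℕ} [NeZero p] (hq : 0 < q)
    {W : Fin p → Submodule ℂ (EuclideanSpace ℂ (Fin d))} (hW : (fracGraph p q).IsSubspaceRep r W) :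
    IsCyclicOrthRep p q fun i : ℕ => W i := by
  refine ⟨fun i => by simp, fun i j h₁ h₂ => ?_⟩
  obtain ⟨s, rfl⟩ := Nat.exists_eq_add_of_le (by omega : i ≤ j)
  have hdist := le_cycDist_natCast_add (p := p) i (s := s) hq (by omega) (by omega)
  refine hW.2 _ _ (fun heq => ?_) fun hadj => hadj.2.not_ge hdist
  rw [← heq, cycDist_eq_min_val_sub, sub_self] at hdist
  simp at hdist
  omega

theorem IsSubspaceRep.pow_two_mul_le {n q d r : ℕ} (hq : 0 < q) (hqn : 2 * q ≤ 2 ^ n)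
    {W : Fin (2 ^ n) → Submodule ℂ (EuclideanSpace ℂ (Fin d))}
    (hW : (fracGraph (2 ^ n) q).IsSubspaceRep r W) : 2 ^ n * r ≤ q * d := by
  have hsum : ∑ i ∈ range (2 ^ n), finrank ℂ (W i) = 2 ^ n * r := by
    rw [sum_const_nat fun (i : ℕ) _ => hW.1 (i : Fin (2 ^ n)), card_range]
  simpa [hsum] using (hW.isCyclicOrthRep hq).sum_finrank_le hq hqn

theorem exists_isSubspaceRep_fracGraph {p q : ℕ} [NeZero p] (hqp : q ≤ p) :
    ∃ W : Fin p → Submodule ℂ (EuclideanSpace ℂ (Fin p)), (fracGraph p q).IsSubspaceRep q W := by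
  let e := EuclideanSpace.basisFun (Fin p) ℂ
  let idx : Fin p → Fin q → Fin p := fun v t => v + Fin.castLE hqp t
  refine ⟨fun v => span ℂ (Set.range fun t => e (idx v t)), fun (v : Fin p) => ?_,
    fun (v w : Fin p) hvw hnadj => ?_⟩
  · have hinj : Injective (idx v) := (add_right_injective v).comp (Fin.castLE_injective hqp)
    exact (finrank_span_eq_card (e.orthonormal.comp _ hinj).linearIndependent).trans
      (Fintype.card_fin q)
  · rw [isOrtho_span]
    rintro _ ⟨s, rfl⟩ _ ⟨t, rfl⟩
    exact e.orthonormal.2 fun h => hnadj ⟨hvw, cycDist_lt_of_add_eq h s.2 t.2⟩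

end FinGraph

/-- For all `n ≥ 1` and `1 ≤ q ≤ 2^(n-1)`, the complement of the projective rank of the
fraction graph `E_{2^n / q}` equals `2^n / q`. -/
theorem xibar_fracGraph_pow_two (n q : ℕ) (hn : 1 ≤ n) (hq : 1 ≤ q)
    (hq' : q ≤ 2 ^ (n - 1)) :
    xibar (fracGraph (2 ^ n) q) = (2 ^ n : ℝ) / (q : ℝ) := by
  have hqn : 2 * q ≤ 2 ^ n := by
    rw [← Nat.sub_add_cancel hn, pow_succ']
    omega
  obtain ⟨W₀, hW₀⟩ := exists_isSubspaceRep_fracGraph (p := 2 ^ n) (q := q) (by omega)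
  rw [xibar_eq_of_isSubspaceRep (Nat.two_pow_pos n) hq hW₀ fun d r W hW =>
    hW.pow_two_mul_le hq hqn]
  norm_cast
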